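/- arXiv:2002.07797 — 4 statements merged into one kernel-verified Lean document; each statement's English description precedes it below -/
import Mathlib

section
/- Fix 0 < p < 1 and define g(b) = 2p((1-p)/(1 - b(1-p)^2)^2 - 1/(b-1)^2). Then b_p := 1/(√(1-p)·(2-p-√(1-p))) satisfies g(b_p) = 0 and 1 < b_p < 1/(1-p)^2. -/
/-!
Put `s = √(1-p) ∈ (0,1)`, so that `1 - p = s²`, `2 - p - s = 1 - s + s²` and `b_p = 1/(s(1 - s + s²))`.
Since `s(1 + s³) = s(1 + s)(1 - s + s²)`, this value satisfies `1 - b_p s⁴ = s(b_p - 1)`, which makes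
the two squared terms of `g` cancel. Both bounds `1 < b_p < 1/s⁴` reduce to `(1 - s)(1 + s²) > 0`.
-/

namespace CriticalExpansion

variable {s : ℝ}

lemma mul_one_sub_add_sq_lt_one (hs1 : s < 1) : s * (1 - s + s ^ 2) < 1 := by
  nlinarith [mul_pos (sub_pos.2 hs1) (add_pos_of_pos_of_nonneg one_pos (sq_nonneg s))]

lemma pow_four_lt_mul_one_sub_add_sq (hs0 : 0 < s) (hs1 : s < 1) :
    s ^ 4 < s * (1 - s + s ^ 2) := by
  have h : s ^ 3 < 1 - s + s ^ 2 := by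
    nlinarith [mul_pos (sub_pos.2 hs1) (add_pos_of_pos_of_nonneg one_pos (sq_nonneg s))]
  nlinarith

lemma one_sub_mul_pow_four {b : ℝ} (hb : b * (s * (1 - s + s ^ 2)) = 1) :
    1 - b * s ^ 4 = s * (b - 1) := by
  linear_combination (-(1 + s)) * hb

lemma sq_div_sq_sub_inv_sq_eq_zero {b : ℝ} (hs0 : s ≠ 0) (hb : 1 - b * s ^ 4 = s * (b - 1)) :
    s ^ 2 / (1 - b * (s ^ 2) ^ 2) ^ 2 - 1 / (b - 1) ^ 2 = 0 := by
  rw [← pow_mul, hb, mul_pow, ← div_div, div_self (pow_ne_zero 2 hs0), sub_self]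

end CriticalExpansion

open CriticalExpansion in
/-- `b_p = 1/(√(1-p)(2-p-√(1-p)))` is a root of the derivative
`g(b) = 2p((1-p)/(1-b(1-p)^2)^2 - 1/(b-1)^2)` and lies in `(1, 1/(1-p)^2)`. -/
theorem stmt_5 (p : ℝ) (hp0 : 0 < p) (hp1 : p < 1) :
    let bp := 1 / (Real.sqrt (1 - p) * (2 - p - Real.sqrt (1 - p)))
    2 * p * ((1 - p) / (1 - bp * (1 - p) ^ 2) ^ 2 - 1 / (bp - 1) ^ 2) = 0 ∧
    1 < bp ∧ bp < 1 / (1 - p) ^ 2 := by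
  intro bp
  set s := Real.sqrt (1 - p)
  have hsq : s ^ 2 = 1 - p := Real.sq_sqrt (by linarith)
  have hs0 : 0 < s := Real.sqrt_pos.2 (by linarith)
  have hs1 : s < 1 := by nlinarith
  have hd : 0 < s * (1 - s + s ^ 2) := mul_pos hs0 (by nlinarith [sq_nonneg (s - 1)])
  have hbp : bp = 1 / (s * (1 - s + s ^ 2)) := by simp only [bp]; congr 2; linarith
  rw [← hsq, hbp]
  refine ⟨?_, one_lt_one_div hd (mul_one_sub_add_sq_lt_one hs1), ?_⟩
  · rw [sq_div_sq_sub_inv_sq_eq_zero hs0.ne' (one_sub_mul_pow_four (one_div_mul_cancel hd.ne')),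
      mul_zero]
  · rw [← pow_mul]
    exact one_div_lt_one_div_of_lt (by positivity) (pow_four_lt_mul_one_sub_add_sq hs0 hs1)
end

section
/- For 0 < p < 1, with b = 1/(√(1-p)·(2-p-√(1-p))), the value 2pb/(b-1) + 2pb(1-p)/(1 - b(1-p)^2) + p^2/(2-p) equals (4 + 4√(1-p))/(2-p) - p. -/
/-!
Substituting `s = √(1-p)`, so that `p = 1 - s²`, turns every quantity into a rational function
of `s`. With `q = 1 - s + s²` the optimal base is `b = 1 / (s q)`, and both denominators of the
ratio share the factor `1 - s + s² - s³ = (1 - s)(1 + s²)`: `b - 1 = (1 - s)(1 + s²) / (s q)` and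
`1 - b s⁴ = (1 - s)(1 + s²) / q`. After cancelling it, the identity is a polynomial one.
-/

/-- The competitive ratio of the monotone trajectory with turning points `bⁱ`. -/
noncomputable def monotoneRatio (p b : ℝ) : ℝ :=
  2 * p * b / (b - 1) + 2 * p * b * (1 - p) / (1 - b * (1 - p) ^ 2) + p ^ 2 / (2 - p)

lemma one_add_sq_sub_pos (s : ℝ) : 0 < 1 + s ^ 2 - s := by
  nlinarith [sq_nonneg (s - 1 / 2)]

lemma one_div_mul_sub_one {s : ℝ} (hs : s ≠ 0) :
    1 / (s * (1 + s ^ 2 - s)) - 1 = (1 - s) * (1 + s ^ 2) / (s * (1 + s ^ 2 - s)) := by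
  have := (one_add_sq_sub_pos s).ne'
  field_simp
  ring

lemma one_sub_one_div_mul_pow_four (s : ℝ) :
    1 - 1 / (s * (1 + s ^ 2 - s)) * s ^ 4 = (1 - s) * (1 + s ^ 2) / (1 + s ^ 2 - s) := by
  have := (one_add_sq_sub_pos s).ne'
  field_simp
  ring

lemma monotoneRatio_one_sub_sq {s : ℝ} (hs0 : 0 < s) (hs1 : s < 1) :
    monotoneRatio (1 - s ^ 2) (1 / (s * (1 + s ^ 2 - s)))
      = (4 + 4 * s) / (1 + s ^ 2) - (1 - s ^ 2) := by
  have hq := (one_add_sq_sub_pos s).ne'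
  have hs := hs0.ne'
  have h1s : 1 - s ≠ 0 := (sub_pos.mpr hs1).ne'
  have h1s2 : 1 + s ^ 2 ≠ 0 := by positivity
  have hsq : (1 - (1 - s ^ 2)) ^ 2 = s ^ 4 := by ring
  have h2p : 2 - (1 - s ^ 2) = 1 + s ^ 2 := by ring
  unfold monotoneRatio
  rw [hsq, h2p, one_div_mul_sub_one hs, one_sub_one_div_mul_pow_four s]
  field_simp
  ring

/-- With the optimal expansion factor `b`, the monotone competitive ratio equals
`(4 + 4√(1-p))/(2-p) - p`. -/
theorem stmt_6 (p : ℝ) (hp0 : 0 < p) (hp1 : p < 1) :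
    let b := 1 / (Real.sqrt (1 - p) * (2 - p - Real.sqrt (1 - p)))
    2 * p * b / (b - 1) + 2 * p * b * (1 - p) / (1 - b * (1 - p) ^ 2) + p ^ 2 / (2 - p)
      = (4 + 4 * Real.sqrt (1 - p)) / (2 - p) - p := by
  intro b
  set s := Real.sqrt (1 - p)
  have hs0 : 0 < s := Real.sqrt_pos.mpr (by linarith)
  have hp : p = 1 - s ^ 2 := by rw [Real.sq_sqrt (by linarith)]; ring
  have hs1 : s < 1 := by nlinarith
  have hb : b = 1 / (s * (1 + s ^ 2 - s)) := by
    show 1 / (s * (2 - p - s)) = _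
    rw [hp]
    ring
  have key := monotoneRatio_one_sub_sq hs0 hs1
  rw [monotoneRatio, ← hb, ← hp] at key
  rw [key, hp]
  ring
end

section
/- For 0 < p < 1, the value R = √((p-2)(p-1)(p(p(4p-3)+5)+2)) + 4/(2-p) - (2-p)p satisfies the equation (1/2)·(R/(p-p^2) + (p-4)/(p^2-3p+2) - 4((p-1)p+2)(p-2)^2/(p(p(2p-9) - R + 12) + 2(R-4))) = 0. -/
/-!
Write `Δ` for the radicand, `s = √Δ` and `u = (1 - p)(2 - p)`, so that `R = s + 4/(2 - p) - (2 - p)p`.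
The last denominator factors as `(2 - p)(s - u)`, and since `Δ - u² = 4p·u·(p² - p + 2)`,
rationalizing it turns the last fraction into `(s + u)/(p - p²)`. What is left is
`(R - s - u)/(p - p²) = (4 - p)/u`, which cancels the middle term.
-/

theorem discr_sub_sq_eq (p : ℝ) :
    (p - 2) * (p - 1) * (p * (p * (4 * p - 3) + 5) + 2) - ((1 - p) * (2 - p)) ^ 2
      = 4 * p * ((1 - p) * (2 - p)) * (p ^ 2 - p + 2) := by
  ring

section
variable {p : ℝ}

theorem sq_lt_discr (hp0 : 0 < p) (hp1 : p < 1) :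
    ((1 - p) * (2 - p)) ^ 2 < (p - 2) * (p - 1) * (p * (p * (4 * p - 3) + 5) + 2) := by
  have hu : 0 < (1 - p) * (2 - p) := mul_pos (by linarith) (by linarith)
  have hq : 0 < p ^ 2 - p + 2 := by nlinarith
  linarith [discr_sub_sq_eq p, mul_pos (mul_pos (mul_pos four_pos hp0) hu) hq]

theorem lt_sqrt_discr (hp0 : 0 < p) (hp1 : p < 1) :
    (1 - p) * (2 - p) < √((p - 2) * (p - 1) * (p * (p * (4 * p - 3) + 5) + 2)) :=
  (Real.lt_sqrt (by nlinarith)).mpr (sq_lt_discr hp0 hp1)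

theorem last_denom_eq (hp2 : p ≠ 2) (s : ℝ) :
    let R := s + 4 / (2 - p) - (2 - p) * p
    p * (p * (2 * p - 9) - R + 12) + 2 * (R - 4) = (2 - p) * (s - (1 - p) * (2 - p)) := by
  have : 2 - p ≠ 0 := sub_ne_zero.mpr hp2.symm
  field_simp
  ring

theorem last_term_eq_of_sq_eq (hp2 : p ≠ 2) {s : ℝ}
    (hs : s ^ 2 = (p - 2) * (p - 1) * (p * (p * (4 * p - 3) + 5) + 2))
    (hsu : s ≠ (1 - p) * (2 - p)) (hpp : p - p ^ 2 ≠ 0) :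
    4 * ((p - 1) * p + 2) * (p - 2) ^ 2 / ((2 - p) * (s - (1 - p) * (2 - p)))
      = (s + (1 - p) * (2 - p)) / (p - p ^ 2) := by
  rw [div_eq_div_iff (mul_ne_zero (sub_ne_zero.mpr hp2.symm) (sub_ne_zero.mpr hsu)) hpp]
  linear_combination (p - 2) * hs

end

/-- The closed-form `1`-sub-monotone competitive ratio satisfies the defining equation. -/
theorem stmt_17 (p : ℝ) (hp0 : 0 < p) (hp1 : p < 1) :
    let R := Real.sqrt ((p - 2) * (p - 1) * (p * (p * (4 * p - 3) + 5) + 2))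
      + 4 / (2 - p) - (2 - p) * p
    (1 / 2 : ℝ) * (R / (p - p ^ 2) + (p - 4) / (p ^ 2 - 3 * p + 2)
      - 4 * ((p - 1) * p + 2) * (p - 2) ^ 2
        / (p * (p * (2 * p - 9) - R + 12) + 2 * (R - 4))) = 0 := by
  intro R
  have hs := lt_sqrt_discr hp0 hp1
  have hp2 : p ≠ 2 := by linarith
  have h1p : 1 - p ≠ 0 := by linarith
  have h2p : 2 - p ≠ 0 := by linarith
  have hpp : p - p ^ 2 = p * (1 - p) := by ring
  rw [last_denom_eq hp2, last_term_eq_of_sq_eq hp2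
    (Real.sq_sqrt ((sq_nonneg _).trans (sq_lt_discr hp0 hp1).le)) hs.ne'
    (hpp ▸ mul_ne_zero hp0.ne' h1p), show p ^ 2 - 3 * p + 2 = (1 - p) * (2 - p) by ring, hpp]
  simp only [R]
  field_simp
  ring
end

section
/- For all 0 < p < 1, the 1-sub-monotone competitive ratio R_1(p) = √((p-2)(p-1)(p(p(4p-3)+5)+2)) + 4/(2-p) - (2-p)p is strictly less than the optimal monotone competitive ratio R_0(p) = (4+4√(1-p))/(2-p) - p. -/
/-!
Put `s = √(1 - p) ∈ (0, 1)`, so that `p = 1 - s²`. After cancelling `4 / (2 - p)` the claim says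
`√R < 4 s / (2 - p) + p (1 - p)`, where `R` is the radicand of the sub-monotone ratio. Both sides of
the squared inequality, cleared of denominators, are polynomials in `s`, and their difference
factors as `4 s² (1 - s)² q(s)` with `q` a polynomial with positive coefficients.
-/

theorem sq_sub_mul_radicand_eq {p s : ℝ} (hs : s ^ 2 = 1 - p) :
    (4 * s + (2 - p) * (p * (1 - p))) ^ 2
        - (2 - p) ^ 2 * ((p - 2) * (p - 1) * (p * (p * (4 * p - 3) + 5) + 2))
      = 4 * s ^ 2 * (1 - s) ^ 2 * (2 + 6 * s + 7 * s ^ 2 + 8 * s ^ 3 + 9 * s ^ 4 + 8 * s ^ 5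
          + 7 * s ^ 6 + 6 * s ^ 7 + 4 * s ^ 8 + 2 * s ^ 9 + s ^ 10) := by
  obtain rfl : p = 1 - s ^ 2 := by linarith
  ring

theorem mul_radicand_lt_sq {p s : ℝ} (hs : s ^ 2 = 1 - p) (hs0 : 0 < s) (hs1 : s < 1) :
    (2 - p) ^ 2 * ((p - 2) * (p - 1) * (p * (p * (4 * p - 3) + 5) + 2))
      < (4 * s + (2 - p) * (p * (1 - p))) ^ 2 := by
  have hpos : 0 < 4 * s ^ 2 * (1 - s) ^ 2 * (2 + 6 * s + 7 * s ^ 2 + 8 * s ^ 3 + 9 * s ^ 4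
      + 8 * s ^ 5 + 7 * s ^ 6 + 6 * s ^ 7 + 4 * s ^ 8 + 2 * s ^ 9 + s ^ 10) := by
    have : 0 < 1 - s := sub_pos.2 hs1
    positivity
  rw [← sq_sub_mul_radicand_eq hs] at hpos
  linarith

/-- The `1`-sub-monotone competitive ratio is strictly smaller than the optimal
monotone competitive ratio, for every `p ∈ (0,1)`. -/
theorem stmt_18 (p : ℝ) (hp0 : 0 < p) (hp1 : p < 1) :
    Real.sqrt ((p - 2) * (p - 1) * (p * (p * (4 * p - 3) + 5) + 2))
      + 4 / (2 - p) - (2 - p) * p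
    < (4 + 4 * Real.sqrt (1 - p)) / (2 - p) - p := by
  set s := Real.sqrt (1 - p)
  have h2p : 0 < 2 - p := by linarith
  have hs : s ^ 2 = 1 - p := Real.sq_sqrt (by linarith)
  have hs0 : 0 < s := Real.sqrt_pos.2 (by linarith)
  have hs1 : s < 1 := (Real.sqrt_lt' one_pos).2 (by linarith)
  have hbound : 0 < 4 * s / (2 - p) + p * (1 - p) :=
    add_pos (div_pos (by positivity) h2p) (mul_pos hp0 (sub_pos.2 hp1))
  have hsqrt : Real.sqrt ((p - 2) * (p - 1) * (p * (p * (4 * p - 3) + 5) + 2))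
      < 4 * s / (2 - p) + p * (1 - p) := by
    rw [Real.sqrt_lt' hbound, div_add' _ _ _ h2p.ne', div_pow, lt_div_iff₀ (by positivity),
      mul_comm]
    simpa only [mul_add, mul_comm (2 - p)] using mul_radicand_lt_sq hs hs0 hs1
  rw [add_div]
  linarith
end
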